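/- Let m, p be nonnegative integers and let R(z) = N(z)/D(z) be the [m+p/m] Padé approximant to e^z. For each j with 1 ≤ j ≤ p, define g_j(z) = (R(z) − Σ_{i=0}^{j-1} z^i/i!)/z^j. Then g_j is a rational function with numerator degree at most m+p−j and denominator D of degree m, and φ_j(z) − g_j(z) = O(z^{2m+p−j+1}) as z → 0; i.e., g_j is the [m+p−j/m] Padé approximant to φ_j. -/

import Mathlib

/-! With `S_j` the Taylor polynomial of `exp` of degree `< j`, the identity
`(N - S_j D)/D = (e^z - S_j) - (e^z - N/D)` shows that `N - S_j D = O(z^j)` near `0`, so `X^j`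
divides it; the quotient `N_j` has degree `≤ m + p - j` since `deg S_j < j ≤ p`, and
`g_j = N_j / D`. Finally `z^j φ_j(z) = e^z - S_j(z)`, so `φ_j - g_j = (e^z - N/D)/z^j`. -/

open Filter Topology Asymptotics

noncomputable def phiFun (j : ℕ) (z : ℂ) : ℂ :=
  ∑' k : ℕ, z ^ k / ((k + j).factorial : ℂ)

open Polynomial

section

variable {𝕜 : Type*} [NontriviallyNormedField 𝕜]

theorem Asymptotics.IsBigO.div_pow_of_pow_add {f : 𝕜 → 𝕜} {n k : ℕ}
    (hf : f =O[𝓝[≠] 0] fun z => z ^ (n + k)) :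
    (fun z => f z / z ^ k) =O[𝓝[≠] 0] fun z => z ^ n := by
  refine (hf.mul (isBigO_refl (fun z => (z ^ k)⁻¹) _)).congr'
    (.of_forall fun z => (div_eq_mul_inv _ _).symm) ?_
  filter_upwards [self_mem_nhdsWithin] with z (hz : z ≠ 0)
  rw [pow_add, mul_inv_cancel_right₀ (pow_ne_zero k hz)]

theorem Polynomial.X_pow_dvd_of_isBigO_pow {P : 𝕜[X]} {n : ℕ}
    (hP : (fun z => P.eval z) =O[𝓝[≠] 0] fun z => z ^ n) : X ^ n ∣ P := by
  induction n generalizing P with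
  | zero => simp
  | succ n ih =>
    have hpow : Tendsto (fun z : 𝕜 => z ^ (n + 1)) (𝓝[≠] 0) (𝓝 0) :=
      ((continuous_pow (n + 1)).tendsto' 0 0 (zero_pow n.succ_ne_zero)).mono_left
        nhdsWithin_le_nhds
    have hP0 : P.eval 0 = 0 :=
      tendsto_nhds_unique ((P.continuous.tendsto 0).mono_left nhdsWithin_le_nhds)
        (hP.trans_tendsto hpow)
    obtain ⟨Q, rfl⟩ : X ∣ P := X_dvd_iff.2 (by rwa [coeff_zero_eq_eval_zero])
    have hQ : (fun z => Q.eval z) =O[𝓝[≠] 0] fun z => z ^ n := by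
      refine (hP.div_pow_of_pow_add (k := 1)).congr' ?_ (.of_forall fun z => rfl)
      filter_upwards [self_mem_nhdsWithin] with z (hz : z ≠ 0)
      simp [hz]
    rw [pow_succ']
    exact mul_dvd_mul_left X (ih hQ)

end

theorem Polynomial.natDegree_le_sub_of_natDegree_X_pow_mul_le {R : Type*} [Semiring R]
    [Nontrivial R] {Q : R[X]} {j n : ℕ} (h : (X ^ j * Q).natDegree ≤ n) :
    Q.natDegree ≤ n - j := by
  rcases eq_or_ne Q 0 with rfl | hQ
  · simp
  · rw [natDegree_X_pow_mul j hQ] at h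
    omega

theorem PowerSeries.natDegree_trunc_le {R : Type*} [Semiring R] (f : PowerSeries R) (n : ℕ) :
    (trunc n f).natDegree ≤ n :=
  natDegree_le_of_degree_le (degree_trunc_lt f n).le

theorem PowerSeries.eval_trunc_exp (n : ℕ) (z : ℂ) :
    (trunc n (exp ℂ)).eval z = ∑ i ∈ Finset.range n, z ^ i / (i.factorial : ℂ) := by
  rw [eval, eval₂_trunc_eq_sum_range]
  refine Finset.sum_congr rfl fun i _ => ?_
  simp [coeff_exp, div_eq_inv_mul]

theorem pow_mul_phiFun (j : ℕ) (z : ℂ) :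
    z ^ j * phiFun j z = Complex.exp z - ∑ i ∈ Finset.range j, z ^ i / (i.factorial : ℂ) := by
  have hexp : Complex.exp z = ∑' n : ℕ, z ^ n / (n.factorial : ℂ) := by
    rw [Complex.exp_eq_exp_ℂ, NormedSpace.exp_eq_tsum_div]
  rw [hexp, ← (NormedSpace.expSeries_div_summable z).sum_add_tsum_nat_add j, add_sub_cancel_left,
    phiFun, ← tsum_mul_left]
  congr 1 with k
  rw [pow_add, mul_comm (z ^ k), mul_div_assoc]

theorem X_pow_dvd_sub_trunc_exp_mul {N D : ℂ[X]} {n : ℕ} (hD0 : D.eval 0 ≠ 0)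
    (hR : (fun z => Complex.exp z - N.eval z / D.eval z) =O[𝓝[≠] 0] fun z => z ^ n) :
    X ^ n ∣ N - PowerSeries.trunc n (PowerSeries.exp ℂ) * D := by
  apply X_pow_dvd_of_isBigO_pow
  have hD : (fun z => D.eval z) =O[𝓝[≠] 0] fun _ => (1 : ℂ) :=
    ((D.continuous.tendsto 0).mono_left nhdsWithin_le_nhds).isBigO_one ℂ
  have hS := (Complex.exp_sub_sum_range_isBigO_pow n).mono (nhdsWithin_le_nhds (s := {0}ᶜ))
  refine (hD.mul (hS.sub hR)).congr' ?_ (.of_forall fun z => one_mul _)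
  have hDne : ∀ᶠ z in 𝓝[≠] 0, D.eval z ≠ 0 :=
    (D.continuous.continuousAt.eventually_ne hD0).filter_mono nhdsWithin_le_nhds
  filter_upwards [hDne] with z hz
  simp only [eval_sub, eval_mul, PowerSeries.eval_trunc_exp]
  field_simp
  ring

theorem pade_phi_recurrence_general (m p j : ℕ) (hjp : j ≤ p)
    (N D : Polynomial ℂ) (hN : N.natDegree ≤ m + p) (hD : D.natDegree ≤ m)
    (hD0 : D.eval 0 = 1)
    (hPade : (fun z : ℂ => Complex.exp z - N.eval z / D.eval z)
      =O[𝓝[≠] (0 : ℂ)] fun z => z ^ (2 * m + p + 1))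
    (g : ℂ → ℂ)
    (hg : ∀ z : ℂ, g z =
      (N.eval z / D.eval z - ∑ i ∈ Finset.range j, z ^ i / (i.factorial : ℂ)) / z ^ j) :
    (∃ Nj : Polynomial ℂ, Nj.natDegree ≤ m + p - j ∧
        ∀ z : ℂ, z ≠ 0 → D.eval z ≠ 0 → g z = Nj.eval z / D.eval z) ∧
      (fun z : ℂ => phiFun j z - g z) =O[𝓝[≠] (0 : ℂ)] fun z => z ^ (2 * m + p - j + 1) := by
  set S := PowerSeries.trunc j (PowerSeries.exp ℂ)
  obtain ⟨Nj, hNj⟩ : X ^ j ∣ N - S * D := X_pow_dvd_sub_trunc_exp_mul (by simp [hD0])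
    (hPade.trans ((isLittleO_pow_pow (by omega)).isBigO.mono nhdsWithin_le_nhds))
  have hS : S.natDegree ≤ j := PowerSeries.natDegree_trunc_le _ j
  have hdeg : (N - S * D).natDegree ≤ m + p :=
    (natDegree_sub_le _ _).trans <| max_le hN <| natDegree_mul_le.trans (by omega)
  refine ⟨⟨Nj, natDegree_le_sub_of_natDegree_X_pow_mul_le (hNj ▸ hdeg), fun z hz hDz => ?_⟩, ?_⟩
  · have hNjz := congrArg (eval z) hNj
    simp only [eval_sub, eval_mul, eval_pow, eval_X, PowerSeries.eval_trunc_exp, S] at hNjz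
    rw [hg, div_eq_div_iff (pow_ne_zero _ hz) hDz]
    field_simp
    linear_combination hNjz
  · have hPade' : (fun z => Complex.exp z - N.eval z / D.eval z)
        =O[𝓝[≠] 0] fun z => z ^ (2 * m + p - j + 1 + j) := by
      rwa [show 2 * m + p - j + 1 + j = 2 * m + p + 1 by omega]
    refine hPade'.div_pow_of_pow_add.congr' ?_ (.of_forall fun z => rfl)
    filter_upwards [self_mem_nhdsWithin] with z (hz : z ≠ 0)
    rw [hg, eq_sub_iff_add_eq, ← add_div, div_eq_iff (pow_ne_zero j hz), mul_comm,
      pow_mul_phiFun]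
    ring

/-- Let `R = N/D` be the `[m+p/m]` Padé approximant to `e^z` (numerator degree `≤ m+p`,
denominator degree `≤ m`, `D(0) = 1`, and `e^z − R(z) = O(z^{2m+p+1})` at `0`).
For `1 ≤ j ≤ p`, set `g_j(z) = (R(z) − ∑_{i<j} z^i/i!)/z^j`.  Then `g_j` is a rational
function with numerator of degree at most `m+p−j` and denominator `D`, and
`φ_j(z) − g_j(z) = O(z^{2m+p−j+1})`; i.e. `g_j` is the `[m+p−j/m]` Padé approximant
to `φ_j`. -/
theorem pade_phi_recurrence (m p j : ℕ) (hj1 : 1 ≤ j) (hjp : j ≤ p)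
    (N D : Polynomial ℂ) (hN : N.natDegree ≤ m + p) (hD : D.natDegree ≤ m)
    (hD0 : D.eval 0 = 1)
    (hPade : (fun z : ℂ => Complex.exp z - N.eval z / D.eval z)
      =O[𝓝[≠] (0 : ℂ)] fun z => z ^ (2 * m + p + 1))
    (g : ℂ → ℂ)
    (hg : ∀ z : ℂ, g z =
      (N.eval z / D.eval z - ∑ i ∈ Finset.range j, z ^ i / (i.factorial : ℂ)) / z ^ j) :
    (∃ Nj : Polynomial ℂ, Nj.natDegree ≤ m + p - j ∧
        ∀ z : ℂ, z ≠ 0 → D.eval z ≠ 0 → g z = Nj.eval z / D.eval z) ∧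
      (fun z : ℂ => phiFun j z - g z) =O[𝓝[≠] (0 : ℂ)] fun z => z ^ (2 * m + p - j + 1) :=
  pade_phi_recurrence_general m p j hjp N D hN hD hD0 hPade g hg
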